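/- arXiv:2505.21222 — 6 statements merged into one kernel-verified Lean document; each statement's English description precedes it below -/
import Mathlib

section
/- Let G be a finite group whose order is p^α q^β for two primes p, q and nonnegative integers α, β. Then for any Sylow p-subgroups P, P' of G and any Sylow q-subgroups Q, Q' of G, there exists an element x ∈ G such that P^x = P' and Q^x = Q'. (That is, G acts transitively by simultaneous conjugation on pairs consisting of a Sylow p-subgroup and a Sylow q-subgroup.) -/
/-! Sylow's theorem makes `G` transitive on Sylow `p`-subgroups and on Sylow `q`-subgroups
separately. For `p ≠ q`, Sylow subgroups `P'` and `Q'` have coprime orders whose product is `|G|`,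
so `G = P'Q' ⊆ N(P')N(Q')`. Given `a` with `a • Q = Q'` and `b` with `b • a • P = P'`, write
`b = st` with `s ∈ N(P')` and `t ∈ N(Q')`; then `ta` moves `P` to `P'` and `Q` to `Q'`.
For `p = q` the group is a `p`-group and has a single Sylow `p`-subgroup. -/

/-- The conjugate subgroup `H^x = x⁻¹ H x`. -/
def conjSub {G : Type*} [Group G] (H : Subgroup G) (x : G) : Subgroup G :=
  H.map (MulAut.conj x⁻¹).toMonoidHom

open MulAction Subgroup
open scoped Pointwise

namespace MulAction

variable {G X Y : Type*} [Group G] [MulAction G X] [MulAction G Y]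

theorem isPretransitive_prod_of_mul_stabilizer_eq_univ [IsPretransitive G X]
    [IsPretransitive G Y]
    (h : ∀ (x : X) (y : Y), (stabilizer G x : Set G) * (stabilizer G y : Set G) = Set.univ) :
    IsPretransitive G (X × Y) := by
  refine ⟨fun ⟨x, y⟩ ⟨x', y'⟩ => ?_⟩
  obtain ⟨a, hay⟩ := exists_smul_eq G y y'
  obtain ⟨b, hbx⟩ := exists_smul_eq G (a • x) x'
  obtain ⟨s, hs, t, ht, rfl⟩ : b ∈ (stabilizer G x' : Set G) * (stabilizer G y' : Set G) :=
    h x' y' ▸ Set.mem_univ b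
  rw [SetLike.mem_coe, mem_stabilizer_iff] at hs ht
  refine ⟨t * a, Prod.ext ?_ ?_⟩
  · calc (t * a) • x = s⁻¹ • (s * t) • a • x := by rw [smul_smul, inv_mul_cancel_left, mul_smul]
      _ = x' := by rw [hbx, inv_smul_eq_iff, hs]
  · show (t * a) • y = y'
    rw [mul_smul, hay, ht]

end MulAction

namespace Sylow

variable {G : Type*} [Group G] {p q : ℕ}

theorem subsingleton_of_isPGroup (hG : IsPGroup p G) : Subsingleton (Sylow p G) :=
  have eq_top (P : Sylow p G) : (P : Subgroup G) = ⊤ :=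
    (P.is_maximal' (hG.to_subgroup ⊤) le_top).symm
  ⟨fun P Q => Sylow.ext ((eq_top P).trans (eq_top Q).symm)⟩

variable [Finite G] [Fact p.Prime] [Fact q.Prime]

theorem card_eq_pow_of_card_eq_pow_mul {α m : ℕ} (hcard : Nat.card G = p ^ α * m)
    (hm : ¬ p ∣ m) (P : Sylow p G) : Nat.card P = p ^ α := by
  have hp : p.Prime := Fact.out
  have hm₀ : m ≠ 0 := by rintro rfl; exact hm (dvd_zero p)
  rw [P.card_eq_multiplicity, hcard, Nat.factorization_mul (pow_ne_zero _ hp.ne_zero) hm₀,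
    Finsupp.add_apply, hp.factorization_pow, Finsupp.single_eq_same,
    Nat.factorization_eq_zero_of_not_dvd hm, add_zero]

theorem isComplement'_of_card_eq_pow_mul_pow (hpq : p ≠ q) {α β : ℕ}
    (hcard : Nat.card G = p ^ α * q ^ β) (P : Sylow p G) (Q : Sylow q G) :
    IsComplement' (P : Subgroup G) Q := by
  have hp : p.Prime := Fact.out
  have hq : q.Prime := Fact.out
  have hcardP : Nat.card P = p ^ α := P.card_eq_pow_of_card_eq_pow_mul hcard fun h =>
    hpq ((Nat.prime_dvd_prime_iff_eq hp hq).mp (hp.dvd_of_dvd_pow h))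
  have hcardQ : Nat.card Q = q ^ β := Q.card_eq_pow_of_card_eq_pow_mul (hcard.trans (mul_comm _ _))
    fun h => hpq ((Nat.prime_dvd_prime_iff_eq hq hp).mp (hq.dvd_of_dvd_pow h)).symm
  refine isComplement'_of_coprime (by rw [hcardP, hcardQ, hcard]) ?_
  rw [hcardP, hcardQ]
  exact Nat.Coprime.pow _ _ ((Nat.coprime_primes hp hq).mpr hpq)

theorem isPretransitive_prod_of_card_eq_pow_mul_pow {α β : ℕ}
    (hcard : Nat.card G = p ^ α * q ^ β) : IsPretransitive G (Sylow p G × Sylow q G) := by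
  rcases eq_or_ne p q with rfl | hpq
  · have := subsingleton_of_isPGroup (IsPGroup.of_card (hcard.trans (pow_add p α β).symm))
    exact ⟨fun _ _ => ⟨1, Subsingleton.elim _ _⟩⟩
  · refine isPretransitive_prod_of_mul_stabilizer_eq_univ fun P Q => Set.eq_univ_of_univ_subset ?_
    rw [stabilizer_eq_normalizer, stabilizer_eq_normalizer,
      ← (isComplement'_of_card_eq_pow_mul_pow hpq hcard P Q).mul_eq]
    exact Set.mul_subset_mul le_normalizer le_normalizer

end Sylow

theorem conjSub_coe_sylow {G : Type*} [Group G] {p : ℕ} (P : Sylow p G) (x : G) :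
    conjSub (P : Subgroup G) x = ↑(x⁻¹ • P) :=
  rfl

/-- **Theorem (two primes).** If `|G| = p^α q^β` for primes `p, q`, then `G` acts transitively
by simultaneous conjugation on pairs of a Sylow `p`-subgroup and a Sylow `q`-subgroup. -/
theorem sylow_pair_transitive_of_two_primes
    (G : Type*) [Group G] [Finite G] (p q : ℕ) (hp : p.Prime) (hq : q.Prime)
    (α β : ℕ) (hcard : Nat.card G = p ^ α * q ^ β)
    (P P' : Sylow p G) (Q Q' : Sylow q G) :
    ∃ x : G, conjSub (P : Subgroup G) x = (P' : Subgroup G) ∧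
      conjSub (Q : Subgroup G) x = (Q' : Subgroup G) := by
  have := Fact.mk hp
  have := Fact.mk hq
  have := Sylow.isPretransitive_prod_of_card_eq_pow_mul_pow (G := G) hcard
  obtain ⟨g, hg⟩ := exists_smul_eq G (P, Q) (P', Q')
  simp only [Prod.smul_mk, Prod.mk.injEq] at hg
  obtain ⟨hgP, hgQ⟩ := hg
  exact ⟨g⁻¹, by rw [conjSub_coe_sylow, inv_inv, hgP], by rw [conjSub_coe_sylow, inv_inv, hgQ]⟩
end

section
/- Let G be a finite group, let p_1, …, p_n be distinct primes, and for each i let P_i be a Sylow p_i-subgroup of G that is not normal in G. Then the union of the normalizers N_G(P_1) ∪ ⋯ ∪ N_G(P_n) is a proper subset of G. -/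
/-!
Pass to an irredundant subcover by normalizers `N_G(P_i)`, `i ∈ T`, and let `p = p_m` be the
largest of its primes; the primes are distinct, so `|T| < p`. Irredundancy gives some `y` lying in
no `N_G(P_i)` with `i ≠ m`. For a Sylow `p`-subgroup `Q`, the coset `yQ` is covered by the
`N_G(P_i)`, so `Q` is covered by fewer than `p` left cosets of the subgroups `Q ∩ N_G(P_i)`. By
B. H. Neumann's lemma one of them has index `< p`, hence index `1` as `Q` is a `p`-group. Then
`Q ≤ N_G(P_i)` and `y ∈ N_G(P_i)`, forcing `i = m`, and `Q ≤ N_G(P_m)` gives `Q = P_m`. So `P_m` is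
the only Sylow `p`-subgroup, hence normal.
-/

open scoped Pointwise

theorem Set.exists_minimal_finset_biUnion_eq_univ {α ι : Type*} [DecidableEq ι] (f : ι → Set α)
    (hcov : ∃ s : Finset ι, ⋃ i ∈ s, f i = Set.univ) :
    ∃ t : Finset ι, ⋃ i ∈ t, f i = Set.univ ∧ ∀ m ∈ t, ⋃ i ∈ t.erase m, f i ≠ Set.univ := by
  obtain ⟨t, ht⟩ := exists_minimal_of_wellFoundedLT _ hcov
  exact ⟨t, ht.prop, fun m hm => ht.not_prop_of_lt (Finset.erase_ssubset hm)⟩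

theorem Finset.card_le_sub_one_of_forall_prime_le {S : Finset ℕ} {b : ℕ}
    (hS : ∀ q ∈ S, q.Prime) (hb : ∀ q ∈ S, q ≤ b) : S.card ≤ b - 1 :=
  calc S.card ≤ (Finset.Ioc 1 b).card :=
        Finset.card_le_card fun q hq => Finset.mem_Ioc.2 ⟨(hS q hq).one_lt, hb q hq⟩
    _ = b - 1 := Nat.card_Ioc 1 b

theorem IsPGroup.exists_eq_top_of_leftCoset_cover {p : ℕ} [Fact p.Prime] {Q : Type*} [Group Q]
    (hQ : IsPGroup p Q) {ι : Type*} {H : ι → Subgroup Q} {g : ι → Q} {s : Finset ι}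
    (hcov : ⋃ i ∈ s, g i • (H i : Set Q) = Set.univ) (hs : s.card < p) :
    ∃ i ∈ s, H i = ⊤ := by
  obtain ⟨i, hi, _, hle⟩ := Subgroup.exists_index_le_card_of_leftCoset_cover hcov
  obtain ⟨k, hk⟩ := hQ.index (H i)
  have hk0 : k = 0 := by
    by_contra hk0
    have := Nat.le_self_pow hk0 p
    omega
  exact ⟨i, hi, Subgroup.index_eq_one.mp (by rw [hk, hk0, pow_zero])⟩

theorem IsPGroup.exists_le_and_mem_of_smul_subset_biUnion {p : ℕ} [Fact p.Prime] {G : Type*}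
    [Group G] {Q : Subgroup G} (hQ : IsPGroup p Q) {ι : Type*} {N : ι → Subgroup G}
    {s : Finset ι} (hs : s.card < p) (y : G)
    (hcov : y • (Q : Set G) ⊆ ⋃ i ∈ s, (N i : Set G)) :
    ∃ i ∈ s, Q ≤ N i ∧ y ∈ N i := by
  classical
  let meets : ι → Prop := fun i => ∃ u : Q, y * u ∈ N i
  have hwitness : ∀ i, ∃ v : Q, meets i → y * v ∈ N i := fun i =>
    (em (meets i)).elim (fun ⟨u, hu⟩ => ⟨u, fun _ => hu⟩) (fun h => ⟨1, fun h' => (h h').elim⟩)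
  choose v hv using hwitness
  have hQcov : ⋃ i ∈ s.filter meets, v i • ((N i).subgroupOf Q : Set Q) = Set.univ := by
    refine Set.eq_univ_of_forall fun x => ?_
    obtain ⟨i, hi, hxi⟩ := Set.mem_iUnion₂.mp (hcov ⟨x, x.2, rfl⟩)
    have hmeets : meets i := ⟨x, hxi⟩
    refine Set.mem_iUnion₂.mpr ⟨i, Finset.mem_filter.mpr ⟨hi, hmeets⟩, ?_⟩
    rw [mem_leftCoset_iff, SetLike.mem_coe, Subgroup.mem_subgroupOf]
    simpa [mul_assoc] using mul_mem (inv_mem (hv i hmeets)) hxi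
  obtain ⟨i, hi, htop⟩ := hQ.exists_eq_top_of_leftCoset_cover hQcov
    ((Finset.card_filter_le _ _).trans_lt hs)
  obtain ⟨his, hmeets⟩ := Finset.mem_filter.mp hi
  have hQle : Q ≤ N i := Subgroup.subgroupOf_eq_top.mp htop
  refine ⟨i, his, hQle, ?_⟩
  simpa using mul_mem (hv i hmeets) (inv_mem (hQle (v i).2))

theorem Sylow.normal_of_card_lt_of_biUnion_eq_univ {p : ℕ} [Fact p.Prime] {G : Type*} [Group G]
    (P : Sylow p G) {ι : Type*} {N : ι → Subgroup G} {s : Finset ι} (hs : s.card < p)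
    (hcov : ⋃ i ∈ s, (N i : Set G) = Set.univ) (y : G)
    (hy : ∀ i ∈ s, y ∈ N i → N i ≤ Subgroup.normalizer (P : Set G)) :
    (P : Subgroup G).Normal := by
  refine Subgroup.normalizer_eq_top_iff.mp ((Subgroup.eq_top_iff' _).mpr fun g => ?_)
  obtain ⟨i, hi, hle, hyi⟩ := (g • P).isPGroup'.exists_le_and_mem_of_smul_subset_biUnion hs y
    (hcov ▸ Set.subset_univ _)
  have hsub : ((g • P : Sylow p G) : Subgroup G) ≤ P :=
    (g • P).isPGroup'.sylow_mem_fixedPoints_iff.mp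
      ((Subgroup.sylow_mem_fixedPoints_iff _).mpr (hle.trans (hy i hi hyi)))
  exact Sylow.smul_eq_iff_mem_normalizer.mp (Sylow.ext ((g • P).is_maximal' P.isPGroup' hsub).symm)

theorem union_sylow_normalizers_ne_univ_general
    (G : Type*) [Group G] (n : ℕ) (p : Fin n → ℕ)
    (hp : ∀ i, (p i).Prime) (hinj : Function.Injective p)
    (P : ∀ i, Sylow (p i) G) (hnn : ∀ i, ¬ (P i : Subgroup G).Normal) :
    (⋃ i, (Subgroup.normalizer ((P i : Subgroup G) : Set G) : Set G)) ≠ Set.univ := by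
  intro hcov
  obtain ⟨T, hTcov, hTmin⟩ := Set.exists_minimal_finset_biUnion_eq_univ
    (fun i => (Subgroup.normalizer ((P i : Subgroup G) : Set G) : Set G))
    ⟨Finset.univ, by simpa using hcov⟩
  obtain ⟨i₀, hi₀, -⟩ := Set.mem_iUnion₂.mp (hTcov ▸ Set.mem_univ (1 : G))
  obtain ⟨m, hmT, hmax⟩ := T.exists_max_image p ⟨i₀, hi₀⟩
  obtain ⟨y, hy⟩ := (Set.ne_univ_iff_exists_notMem _).mp (hTmin m hmT)
  have hcard : T.card < p m := by
    have := (T.image p).card_le_sub_one_of_forall_prime_le (b := p m)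
      (by simpa using fun i _ => hp i) (by simpa using hmax)
    rw [Finset.card_image_of_injective T hinj] at this
    have := (hp m).pos
    omega
  have := Fact.mk (hp m)
  refine hnn m ((P m).normal_of_card_lt_of_biUnion_eq_univ hcard hTcov y fun i hi hyi => ?_)
  obtain rfl : i = m := by_contra fun him =>
    hy (Set.mem_biUnion (Finset.mem_erase.mpr ⟨him, hi⟩) hyi)
  exact le_rfl

/-- **Theorem.** A finite group is not the union of Sylow normalizers of non-normal
Sylow subgroups for distinct primes. -/
theorem union_sylow_normalizers_ne_univ
    (G : Type*) [Group G] [Finite G] (n : ℕ) (p : Fin n → ℕ)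
    (hp : ∀ i, (p i).Prime) (hinj : Function.Injective p)
    (P : ∀ i, Sylow (p i) G) (hnn : ∀ i, ¬ (P i : Subgroup G).Normal) :
    (⋃ i, (Subgroup.normalizer ((P i : Subgroup G) : Set G) : Set G)) ≠ Set.univ :=
  union_sylow_normalizers_ne_univ_general G n p hp hinj P hnn
end

section
/- Let G be a finite group such that for every prime p and every Sylow p-subgroup P of G, the index |P : O_p(G)| is at most p. Then for any choice of distinct primes p_1, …, p_n and Sylow p_i-subgroups P_i of G, there exists a single element x ∈ G such that P_i ∩ P_i^x = O_{p_i}(G) for all i = 1, …, n. -/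
/-- The `p`-core `O_p(G)`: the intersection of all Sylow `p`-subgroups of `G`. -/
def pCore (G : Type*) [Group G] (p : ℕ) : Subgroup G :=
  ⨅ P : Sylow p G, (P : Subgroup G)

open Subgroup

section PCore

variable {G : Type*} [Group G] {p : ℕ}

theorem pCore_le (P : Sylow p G) : pCore G p ≤ P := iInf_le _ P

theorem isPGroup_pCore [Finite G] : IsPGroup p (pCore G p) :=
  (default : Sylow p G).2.to_le (pCore_le _)

open scoped Pointwise in
instance pCore_normal : (pCore G p).Normal where
  conj_mem x hx g := by
    refine mem_iInf.mpr fun Q ↦ ?_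
    have hx' : x ∈ (((ConjAct.toConjAct g)⁻¹ • Q : Sylow p G) : Subgroup G) := mem_iInf.mp hx _
    rwa [Sylow.pointwise_smul_def, mem_pointwise_smul_iff_inv_smul_mem, inv_inv,
      ConjAct.toConjAct_smul] at hx'

theorem le_pCore_of_normal {W : Subgroup G} (hW : IsPGroup p W) [W.Normal] : W ≤ pCore G p :=
  le_iInf fun Q ↦ le_sup_right.trans (Q.3 (Q.2.to_sup_of_normal_right hW) le_sup_left).le

theorem pCore_eq_of_normal (P : Sylow p G) [(P : Subgroup G).Normal] : pCore G p = P :=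
  (pCore_le P).antisymm (le_pCore_of_normal P.2)

theorem map_pCore_le [Finite G] {H : Type*} [Group H] {f : G →* H} (hf : Function.Surjective f) :
    (pCore G p).map f ≤ pCore H p :=
  have : ((pCore G p).map f).Normal := pCore_normal.map f hf
  le_pCore_of_normal (isPGroup_pCore.map f)

theorem relIndex_pCore_map_le [Finite G] {H : Type*} [Group H] {f : G →* H}
    (hf : Function.Surjective f) (R : Subgroup G) :
    (pCore H p).relIndex (R.map f) ≤ (pCore G p).relIndex R := by
  have hdvd : (pCore H p).relIndex (R.map f) ∣ (pCore G p).relIndex R :=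
    calc (pCore H p).relIndex (R.map f)
        ∣ ((pCore G p).map f).relIndex (R.map f) := relIndex_dvd_of_le_left _ (map_pCore_le hf)
      _ = (pCore G p ⊔ f.ker).relIndex R := by rw [← relIndex_comap, comap_map_eq]
      _ ∣ (pCore G p).relIndex R := relIndex_dvd_of_le_left _ le_sup_left
  exact Nat.le_of_dvd (Nat.pos_of_ne_zero isFiniteRelIndex_of_finiteIndex.1) hdvd

end PCore

section ConjSub

variable {G : Type*} [Group G] {H : Subgroup G} {x : G}

theorem conjSub_eq_self_iff : conjSub H x = H ↔ x ∈ normalizer (H : Set G) := by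
  rw [← inv_mem_iff, mem_normalizer_iff_map_conj_eq]
  rfl

theorem conjSub_eq_self_of_normal [H.Normal] (x : G) : conjSub H x = H :=
  conjSub_eq_self_iff.mpr (le_normalizer_of_normal (mem_top x))

theorem conjSub_mono {K : Subgroup G} (h : H ≤ K) (x : G) : conjSub H x ≤ conjSub K x :=
  map_mono h

theorem inf_conjSub_eq_left_iff [Finite G] :
    H ⊓ conjSub H x = H ↔ x ∈ normalizer (H : Set G) := by
  rw [inf_eq_left, ← conjSub_eq_self_iff]
  refine ⟨fun h ↦ (eq_of_le_of_card_ge h ?_).symm, fun h ↦ h.ge⟩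
  exact (card_map_of_injective (MulAut.conj x⁻¹).injective).le

end ConjSub

section SmallIndex

variable {G : Type*} [Group G] [Finite G] {p : ℕ} [Fact p.Prime]

theorem IsPGroup.eq_or_eq_of_relIndex_le {H M K : Subgroup G} (hK : IsPGroup p K)
    (hHM : H ≤ M) (hMK : M ≤ K) (hHK : H.relIndex K ≤ p) : M = H ∨ M = K := by
  obtain ⟨j, hj⟩ := (hK.to_le hMK).index (H.subgroupOf M)
  have hmul := relIndex_mul_relIndex H M K hHM hMK
  have hMK0 : M.relIndex K ≠ 0 := isFiniteRelIndex_of_finiteIndex.1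
  rcases j with _ | j
  · exact .inl (hHM.antisymm' (relIndex_eq_one.mp hj))
  · refine .inr (hMK.antisymm (relIndex_eq_one.mp ?_))
    have hp := (Fact.out : p.Prime).pos
    rw [show H.relIndex M = p ^ (j + 1) from hj, pow_succ, mul_assoc] at hmul
    have : p * M.relIndex K ≤ p * 1 :=
      (Nat.le_mul_of_pos_left _ (pow_pos hp j)).trans (hmul ▸ hHK.trans (mul_one p).ge)
    have := Nat.le_of_mul_le_mul_left this hp
    omega

theorem inf_conjSub_eq_pCore (P : Sylow p G) (hP : (pCore G p).relIndex P ≤ p)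
    {x : G} (hx : x ∉ normalizer (P : Subgroup G)) :
    (P : Subgroup G) ⊓ conjSub P x = pCore G p := by
  have hle : pCore G p ≤ (P : Subgroup G) ⊓ conjSub P x :=
    le_inf (pCore_le P)
      (conjSub_eq_self_of_normal (H := pCore G p) x ▸ conjSub_mono (pCore_le P) x)
  refine (P.2.eq_or_eq_of_relIndex_le hle inf_le_left hP).resolve_right ?_
  rwa [inf_conjSub_eq_left_iff]

end SmallIndex

theorem Sylow.normalizer_sup_eq_top_of_normal_sup {G : Type*} [Group G] [Finite G] {p : ℕ}
    [Fact p.Prime] (P : Sylow p G) {V : Subgroup G} (hPV : ((P : Subgroup G) ⊔ V).Normal) :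
    normalizer (P : Subgroup G) ⊔ V = ⊤ := by
  have := hPV
  rw [← P.normalizer_sup_eq_top' (N := (P : Subgroup G) ⊔ V) le_sup_left, ← sup_assoc,
    ← P.coe_coe, sup_of_le_left le_normalizer]

theorem Nat.card_lt_of_injective_prime_dvd {ι : Type*} [Finite ι] {p : ι → ℕ}
    (hp : ∀ i, (p i).Prime) (hinj : Function.Injective p) {m : ℕ} (hm : m ≠ 0)
    (hdvd : ∀ i, p i ∣ m) : Nat.card ι < m := by
  let toPrimeFactors : ι → m.primeFactors := fun i ↦ ⟨p i, (hp i).mem_primeFactors (hdvd i) hm⟩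
  calc Nat.card ι ≤ Nat.card m.primeFactors :=
        Nat.card_le_card_of_injective toPrimeFactors fun i j h ↦ hinj (congrArg Subtype.val h)
    _ ≤ (Finset.Icc 2 m).card := by
        rw [Nat.card_eq_finsetCard]
        exact Finset.card_le_card fun q hq ↦ Finset.mem_Icc.mpr
          ⟨(Nat.prime_of_mem_primeFactors hq).two_le, Nat.le_of_mem_primeFactors hq⟩
    _ < m := by simp only [Nat.card_Icc]; omega

theorem Subgroup.exists_mul_notMem_of_inf_eq_bot {G : Type*} [Group G] {ι : Type*} [Finite ι]
    {V : Subgroup G} {H : ι → Subgroup G} (hVH : ∀ i, V ⊓ H i = ⊥)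
    (hcard : Nat.card ι < Nat.card V) (g : G) : ∃ v ∈ V, ∀ i, g * v ∉ H i := by
  by_contra! h
  choose i hi using h
  have hinj : Function.Injective fun v : V ↦ i v v.2 := by
    intro a b hab
    have hab' : (a : G)⁻¹ * b ∈ V ⊓ H (i a a.2) := by
      refine mem_inf.mpr ⟨mul_mem (inv_mem a.2) b.2, ?_⟩
      simpa [mul_assoc] using mul_mem (inv_mem (hi a a.2)) ((congrArg H hab).ge (hi b b.2))
    rw [hVH, mem_bot, inv_mul_eq_one] at hab'
    exact Subtype.ext hab'
  exact hcard.not_ge (Nat.card_le_card_of_injective _ hinj)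

section MinimalNormal

variable {G : Type*} [Group G] {V : Subgroup G} [V.Normal] [IsMulCommutative V]

theorem normal_inf_of_sup_eq_top {H : Subgroup G} (h : H ⊔ V = ⊤) : (V ⊓ H).Normal := by
  rw [← normalizer_eq_top_iff, eq_top_iff, ← h]
  refine sup_le ((le_inf le_normalizer_of_normal le_normalizer).trans
    inf_normalizer_le_normalizer_inf) ?_
  calc V ≤ centralizer V := le_centralizer V
    _ ≤ centralizer (V ⊓ H : Subgroup G) := centralizer_le inf_le_left
    _ ≤ normalizer _ := centralizer_le_normalizer _

variable [Finite G] (hV : Minimal (fun U : Subgroup G ↦ U.Normal ∧ U ≠ ⊥) V) {p : ℕ}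
  [Fact p.Prime] {P : Sylow p G} (hP : ¬(P : Subgroup G).Normal)
  (hPV : ((P : Subgroup G) ⊔ V).Normal)
include hV hP hPV

theorem inf_normalizer_eq_bot_of_minimal : V ⊓ normalizer (P : Subgroup G) = ⊥ := by
  have htop := P.normalizer_sup_eq_top_of_normal_sup hPV
  by_contra hne
  have hle : V ≤ normalizer (P : Subgroup G) :=
    (hV.eq_of_le ⟨normal_inf_of_sup_eq_top htop, hne⟩ inf_le_left).ge.trans inf_le_right
  rw [sup_of_le_left hle, normalizer_eq_top_iff] at htop
  exact hP htop

theorem dvd_card_sub_one_of_minimal : p ∣ Nat.card V - 1 := by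
  have hcompl : (normalizer (P : Subgroup G)).IsComplement' V := by
    refine isComplement'_of_disjoint_and_mul_eq_univ ?_ ?_
    · exact disjoint_iff.mpr (inf_comm V _ ▸ inf_normalizer_eq_bot_of_minimal hV hP hPV)
    · rw [← mul_normal, P.normalizer_sup_eq_top_of_normal_sup hPV, coe_top]
  have hmod := card_sylow_modEq_one p G
  rw [P.card_eq_index_normalizer, ← P.coe_coe, hcompl.symm.index_eq_card] at hmod
  exact (Nat.modEq_iff_dvd' Nat.card_pos).mp hmod.symm

end MinimalNormal

theorem exists_forall_normal_of_mem_normalizer_of_quotient {G : Type*} [Group G] [Finite G]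
    {V : Subgroup G} [V.Normal] [IsMulCommutative V]
    (hV : Minimal (fun U : Subgroup G ↦ U.Normal ∧ U ≠ ⊥) V) {ι : Type*} [Finite ι] {p : ι → ℕ}
    [∀ i, Fact (p i).Prime] (hinj : Function.Injective p) (P : ∀ i, Sylow (p i) G) {x : G}
    (hx : ∀ i, (x : G ⧸ V) ∈ normalizer ((P i : Subgroup G).map (QuotientGroup.mk' V)) →
      ((P i : Subgroup G).map (QuotientGroup.mk' V)).Normal) :
    ∃ y : G, ∀ i, y ∈ normalizer (P i : Subgroup G) → (P i : Subgroup G).Normal := by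
  set f := QuotientGroup.mk' V
  let B := {i // ¬(P i : Subgroup G).Normal ∧ ((P i : Subgroup G).map f).Normal}
  have hsupV (i : B) : ((P i : Subgroup G) ⊔ V).Normal := by
    simpa [f, comap_map_eq] using i.2.2.comap f
  have hcard : Nat.card B < Nat.card V := by
    have hV1 : 1 < Nat.card V := (one_lt_card_iff_ne_bot V).mpr hV.prop.2
    refine (Nat.card_lt_of_injective_prime_dvd (p := fun i : B ↦ p i) (fun i ↦ Fact.out)
      (hinj.comp Subtype.val_injective) (by omega)
      fun i ↦ dvd_card_sub_one_of_minimal hV i.2.1 (hsupV i)).trans_le (Nat.sub_le _ _)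
  obtain ⟨v, hvV, hv⟩ := exists_mul_notMem_of_inf_eq_bot
    (fun i ↦ inf_normalizer_eq_bot_of_minimal hV i.2.1 (hsupV i)) hcard x
  refine ⟨x * v, fun i hi ↦ ?_⟩
  by_contra hPi
  by_cases hQi : ((P i : Subgroup G).map f).Normal
  · exact hv ⟨i, hPi, hQi⟩ hi
  · refine hQi (hx i ?_)
    have hfx : f (x * v) = x := by simp [f, (QuotientGroup.eq_one_iff v).mpr hvV]
    exact hfx ▸ le_normalizer_map f (mem_map_of_mem f hi)

def HasSmallPCoreIndex (G : Type*) [Group G] : Prop :=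
  ∀ p : ℕ, p.Prime → ∀ P : Sylow p G, (pCore G p).relIndex (P : Subgroup G) ≤ p

namespace HasSmallPCoreIndex

variable {G : Type*} [Group G] [Finite G] (hG : HasSmallPCoreIndex G)
include hG

theorem of_surjective {H : Type*} [Group H] {f : G →* H} (hf : Function.Surjective f) :
    HasSmallPCoreIndex H := by
  intro p hp Q
  have := Fact.mk hp
  obtain ⟨R, rfl⟩ := Sylow.mapSurjective_surjective hf p Q
  rw [Sylow.coe_mapSurjective]
  exact (relIndex_pCore_map_le hf R).trans (hG p hp R)

theorem isZGroup (hcore : ∀ p : ℕ, p.Prime → pCore G p = ⊥) : IsZGroup G := by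
  refine ⟨fun p hp P ↦ ?_⟩
  have := Fact.mk hp
  obtain ⟨k, hk⟩ := P.2.exists_card_eq
  have hcard : Nat.card P ≤ p := by simpa [hcore p hp, relIndex_bot_left] using hG p hp P
  have hk1 : k ≤ 1 := (Nat.pow_le_pow_iff_right hp.one_lt).mp (by rwa [pow_one, ← hk])
  exact isCyclic_of_card_dvd_prime (hk ▸ (pow_dvd_pow p hk1).trans (pow_one p).dvd)

theorem exists_normal_isMulCommutative_ne_bot [Nontrivial G] :
    ∃ A : Subgroup G, A.Normal ∧ IsMulCommutative A ∧ A ≠ ⊥ := by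
  by_cases hcore : ∃ q : ℕ, q.Prime ∧ pCore G q ≠ ⊥
  · obtain ⟨q, hq, hne⟩ := hcore
    have := Fact.mk hq
    have : Nontrivial (pCore G q) := (nontrivial_iff_ne_bot _).mpr hne
    have := (isPGroup_pCore (G := G) (p := q)).center_nontrivial
    refine ⟨(center (pCore G q)).map (pCore G q).subtype, inferInstance, inferInstance, ?_⟩
    rw [Ne, map_eq_bot_iff_of_injective _ (subtype_injective _)]
    exact (nontrivial_iff_ne_bot _).mp ‹_›
  · push Not at hcore
    have := hG.isZGroup hcore
    by_cases hc : commutator G = ⊥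
    · refine ⟨⊤, inferInstance, ?_, top_ne_bot⟩
      exact le_centralizer_iff_isMulCommutative.mp (commutator_eq_bot_iff_le_centralizer.mp hc)
    · have := IsZGroup.isCyclic_commutator G
      exact ⟨commutator G, inferInstance, IsCyclic.isMulCommutative, hc⟩

theorem exists_forall_normal_of_mem_normalizer {ι : Type*} [Finite ι] {p : ι → ℕ}
    [∀ i, Fact (p i).Prime] (hinj : Function.Injective p) (P : ∀ i, Sylow (p i) G) :
    ∃ x : G, ∀ i, x ∈ normalizer (P i : Subgroup G) → (P i : Subgroup G).Normal := by
  induction hN : Nat.card G using Nat.strong_induction_on generalizing G with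
  | _ N ih =>
  rcases subsingleton_or_nontrivial G with _ | _
  · exact ⟨1, fun i _ ↦ Subsingleton.elim ⊤ (P i : Subgroup G) ▸ normal_of_isMulCommutative ⊤⟩
  obtain ⟨A, hA, hAcomm, hAbot⟩ := hG.exists_normal_isMulCommutative_ne_bot
  obtain ⟨V, hVA, hV⟩ :=
    exists_minimal_le_of_wellFoundedLT (fun U : Subgroup G ↦ U.Normal ∧ U ≠ ⊥) A ⟨hA, hAbot⟩
  have := hV.prop.1
  have : IsMulCommutative V := le_centralizer_iff_isMulCommutative.mp
    (hVA.trans ((le_centralizer A).trans (centralizer_le hVA)))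
  have hf := QuotientGroup.mk'_surjective V
  have hlt : Nat.card (G ⧸ V) < N := by
    rw [← hN, card_eq_card_quotient_mul_card_subgroup V]
    exact lt_mul_of_one_lt_right Nat.card_pos ((one_lt_card_iff_ne_bot V).mpr hV.prop.2)
  obtain ⟨y, hy⟩ := ih _ hlt (hG.of_surjective hf) (fun i ↦ (P i).mapSurjective hf) rfl
  obtain ⟨x, rfl⟩ := hf y
  exact exists_forall_normal_of_mem_normalizer_of_quotient hV hinj P
    (by simpa only [Sylow.coe_mapSurjective, QuotientGroup.mk'_apply] using hy)

end HasSmallPCoreIndex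

/-- **Corollary.** If `|P : O_p(G)| ≤ p` for every prime `p` and every Sylow `p`-subgroup `P`,
then for any Sylow subgroups `P_i` for distinct primes `p_i` there is a single `x ∈ G` with
`P_i ∩ P_i^x = O_{p_i}(G)` for all `i`. -/
theorem exists_sync_of_small_sylow
    (G : Type*) [Group G] [Finite G]
    (hsmall : ∀ (p : ℕ), p.Prime → ∀ P : Sylow p G, (pCore G p).relIndex (P : Subgroup G) ≤ p)
    (n : ℕ) (p : Fin n → ℕ) (hp : ∀ i, (p i).Prime) (hinj : Function.Injective p)
    (P : ∀ i, Sylow (p i) G) :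
    ∃ x : G, ∀ i, (P i : Subgroup G) ⊓ conjSub (P i : Subgroup G) x = pCore G (p i) := by
  have := fun i ↦ Fact.mk (hp i)
  obtain ⟨x, hx⟩ := HasSmallPCoreIndex.exists_forall_normal_of_mem_normalizer hsmall hinj P
  refine ⟨x, fun i ↦ ?_⟩
  by_cases hxi : x ∈ normalizer (P i : Subgroup G)
  · have := hx i hxi
    rw [conjSub_eq_self_of_normal, inf_idem, pCore_eq_of_normal (P i)]
  · exact inf_conjSub_eq_pCore (P i) (hsmall (p i) (hp i) (P i)) hxi
end

section
/- Let G be a finite group and let H(G) denote its hypercenter, i.e., the final (stabilizing) term of the upper central series of G. Then the Fitting subgroup of the quotient G/H(G) equals the image F(G)/H(G) of the Fitting subgroup of G. -/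
/-! The image of `F(G)` in `G/Z`, `Z = ζₘ(G)`, is nilpotent and normal, hence lies in `F(G/Z)`.
Conversely, the preimage `K` of `F(G/Z)` is an extension of the nilpotent group `K/Z` by
`Z ≤ ζₘ(K)`, and a kernel inside `ζₘ` raises the nilpotency class by at most `m`; so `K` is
nilpotent and lies in `F(G)`. -/

namespace Subgroup

variable {G : Type*} [Group G]

theorem comap_subtype_upperCentralSeries_le (H : Subgroup G) (n : ℕ) :
    (upperCentralSeries G n).comap H.subtype ≤ upperCentralSeries H n := by
  induction n with
  | zero => simp
  | succ n ih =>
    intro x hx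
    rw [mem_comap] at hx
    exact mem_upperCentralSeries_succ_iff.mpr fun y =>
      ih (mem_upperCentralSeries_succ_iff.mp hx y)

theorem comap_upperCentralSeries_le_of_ker_le {H : Type*} [Group H] (f : G →* H) {k : ℕ}
    (hf : f.ker ≤ upperCentralSeries G k) (n : ℕ) :
    (upperCentralSeries H n).comap f ≤ upperCentralSeries G (k + n) := by
  induction n with
  | zero => simpa [MonoidHom.comap_bot] using hf
  | succ n ih =>
    intro x hx
    exact mem_upperCentralSeries_succ_iff.mpr fun y =>
      ih (by simpa using mem_upperCentralSeries_succ_iff.mp hx (f y))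

theorem isNilpotent_of_ker_le_upperCentralSeries {H : Type*} [Group H] (f : G →* H) {k : ℕ}
    (hf : f.ker ≤ upperCentralSeries G k) [Group.IsNilpotent H] : Group.IsNilpotent G := by
  obtain ⟨n, hn⟩ := Group.IsNilpotent.nilpotent H
  refine ⟨k + n, eq_top_iff.mpr fun x _ => comap_upperCentralSeries_le_of_ker_le f hf n ?_⟩
  simp [hn]

theorem isNilpotent_map {H : Type*} [Group H] (f : G →* H) (K : Subgroup G)
    [Group.IsNilpotent K] : Group.IsNilpotent (K.map f) :=
  Group.nilpotent_of_surjective _ (f.subgroupMap_surjective K)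

theorem isNilpotent_comap_of_ker_le_upperCentralSeries {H : Type*} [Group H] (f : G →* H)
    {k : ℕ} (hf : f.ker ≤ upperCentralSeries G k) (K : Subgroup H) [Group.IsNilpotent K] :
    Group.IsNilpotent (K.comap f) := by
  refine isNilpotent_of_ker_le_upperCentralSeries (f.subgroupComap K) (k := k) fun x hx => ?_
  have hx : f x = 1 := congrArg Subtype.val (MonoidHom.mem_ker.mp hx)
  exact comap_subtype_upperCentralSeries_le _ k (hf hx)

end Subgroup

theorem fitting_quotient_hypercenter_general
    (G : Type*) [Group G]
    (m : ℕ)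
    (F : Subgroup G) (hF : F.Normal) (hFnilp : Group.IsNilpotent F)
    (hFmax : ∀ M : Subgroup G, M.Normal → Group.IsNilpotent M → M ≤ F)
    (F' : Subgroup (G ⧸ Subgroup.upperCentralSeries G m)) (hF' : F'.Normal)
    (hF'nilp : Group.IsNilpotent F')
    (hF'max : ∀ M : Subgroup (G ⧸ Subgroup.upperCentralSeries G m),
      M.Normal → Group.IsNilpotent M → M ≤ F') :
    F' = F.map (QuotientGroup.mk' (Subgroup.upperCentralSeries G m)) := by
  set π := QuotientGroup.mk' (Subgroup.upperCentralSeries G m)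
  have hπ : Function.Surjective π := QuotientGroup.mk'_surjective _
  have hker : π.ker ≤ Subgroup.upperCentralSeries G m := (QuotientGroup.ker_mk' _).le
  have hpreimage : F'.comap π ≤ F :=
    hFmax _ (hF'.comap π) (Subgroup.isNilpotent_comap_of_ker_le_upperCentralSeries π hker F')
  refine le_antisymm ?_ (hF'max _ (hF.map π hπ) (Subgroup.isNilpotent_map π F))
  calc F' = (F'.comap π).map π := (Subgroup.map_comap_eq_self_of_surjective hπ F').symm
    _ ≤ F.map π := Subgroup.map_mono hpreimage

/-- **Lemma.** Let `G` be a finite group and `H(G)` its hypercenter, i.e. the stabilizing term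
`upperCentralSeries G m` of the upper central series. Then the Fitting subgroup (the largest
nilpotent normal subgroup) of `G ⧸ H(G)` is the image of the Fitting subgroup of `G`. -/
theorem fitting_quotient_hypercenter
    (G : Type*) [Group G] [Finite G]
    (m : ℕ) (hstab : ∀ n, m ≤ n → Subgroup.upperCentralSeries G n = Subgroup.upperCentralSeries G m)
    (F : Subgroup G) (hF : F.Normal) (hFnilp : Group.IsNilpotent F)
    (hFmax : ∀ M : Subgroup G, M.Normal → Group.IsNilpotent M → M ≤ F)
    (F' : Subgroup (G ⧸ Subgroup.upperCentralSeries G m)) (hF' : F'.Normal)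
    (hF'nilp : Group.IsNilpotent F')
    (hF'max : ∀ M : Subgroup (G ⧸ Subgroup.upperCentralSeries G m),
      M.Normal → Group.IsNilpotent M → M ≤ F') :
    F' = F.map (QuotientGroup.mk' (Subgroup.upperCentralSeries G m)) :=
  fitting_quotient_hypercenter_general G m F hF hFnilp hFmax F' hF' hF'nilp hF'max
end

section
/- Let G be a finite group, p a prime, P a Sylow p-subgroup of G, and n ≥ 1. Let D = G^n be the direct product of n copies of G and let Q = P^n ≤ D (which is a Sylow p-subgroup of D). Then Γ_D(Q) equals the Cartesian product of n copies of Γ_G(P); that is, a tuple (x_1, …, x_n) ∈ D lies in Γ_D(Q) if and only if x_i ∈ Γ_G(P) for every i. In particular, |Γ_D(Q)|/|D| = (|Γ_G(P)|/|G|)^n. -/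
/-- `Γ_G(P)`: the set of `x ∈ G` such that `P ∩ P^x` is inclusion-minimal in the family
`{P ∩ P^g : g ∈ G}`. -/
def Gamma {G : Type*} [Group G] (P : Subgroup G) : Set G :=
  {x : G | ∀ g : G, P ⊓ conjSub P g ≤ P ⊓ conjSub P x → P ⊓ conjSub P g = P ⊓ conjSub P x}

lemma mem_conjSub {G : Type*} [Group G] {H : Subgroup G} {x y : G} :
    y ∈ conjSub H x ↔ x * y * x⁻¹ ∈ H := by
  simp only [conjSub, Subgroup.mem_map, MulEquiv.coe_toMonoidHom, MulAut.conj_apply, inv_inv]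
  constructor
  · rintro ⟨h, hh, rfl⟩
    simpa [mul_assoc] using hh
  · intro h
    exact ⟨x * y * x⁻¹, h, by group⟩

namespace Subgroup

variable {η : Type*} {f : η → Type*} [∀ i, Group (f i)]

lemma pi_univ_le_pi_univ_iff {H K : ∀ i, Subgroup (f i)} :
    pi Set.univ H ≤ pi Set.univ K ↔ ∀ i, H i ≤ K i := by
  classical
  refine ⟨fun h i a ha => ?_, fun h y hy i _ => h i (hy i (Set.mem_univ i))⟩
  simpa using h ((mulSingle_mem_pi i a).2 fun _ => ha) i (Set.mem_univ i)

lemma pi_univ_injective : Function.Injective (pi Set.univ : (∀ i, Subgroup (f i)) → _) :=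
  fun _ _ h => funext fun i =>
    le_antisymm (pi_univ_le_pi_univ_iff.1 h.le i) (pi_univ_le_pi_univ_iff.1 h.ge i)

lemma pi_univ_inf_pi_univ (H K : ∀ i, Subgroup (f i)) :
    pi Set.univ H ⊓ pi Set.univ K = pi Set.univ (H ⊓ K) := by
  ext y
  simp only [mem_inf, mem_pi, Set.mem_univ, forall_const, Pi.inf_apply]
  exact forall_and.symm

end Subgroup

section Pi

open Subgroup

variable {η : Type*} {f : η → Type*} [∀ i, Group (f i)]

lemma conjSub_pi_univ (H : ∀ i, Subgroup (f i)) (g : ∀ i, f i) :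
    conjSub (pi Set.univ H) g = pi Set.univ fun i => conjSub (H i) (g i) := by
  ext y
  simp only [mem_conjSub, mem_pi, Set.mem_univ, forall_const, Pi.mul_apply, Pi.inv_apply]

lemma pi_univ_inf_conjSub (H : ∀ i, Subgroup (f i)) (g : ∀ i, f i) :
    pi Set.univ H ⊓ conjSub (pi Set.univ H) g =
      pi Set.univ fun i => H i ⊓ conjSub (H i) (g i) := by
  rw [conjSub_pi_univ, pi_univ_inf_pi_univ]
  rfl

/-- `Q ∩ Q^g` is the product of the `H i ∩ (H i)^(g i)`, and changing one coordinate of `g`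
changes only that factor, so minimality in the product is minimality in every factor. -/
theorem gamma_pi_univ (H : ∀ i, Subgroup (f i)) :
    Gamma (pi Set.univ H) = Set.univ.pi fun i => Gamma (H i) := by
  classical
  ext x
  simp only [Gamma, Set.mem_ofPred_eq, Set.mem_univ_pi, pi_univ_inf_conjSub,
    pi_univ_le_pi_univ_iff, pi_univ_injective.eq_iff]
  constructor
  · intro hx i g hg
    have hupdate := hx (Function.update x i g)
    simp only [Function.apply_update (fun j y => H j ⊓ conjSub (H j) y)] at hupdate
    exact Function.update_eq_self_iff.1 (hupdate (update_le_self_iff.2 hg))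
  · exact fun hx g hg => funext fun i => hx i (g i) (hg i)

lemma natCard_gamma_pi_univ [Fintype η] (H : ∀ i, Subgroup (f i)) :
    Nat.card (Gamma (pi Set.univ H)) = ∏ i, Nat.card (Gamma (H i)) := by
  rw [gamma_pi_univ, Nat.card_congr (Equiv.Set.univPi _), Nat.card_pi]

end Pi

theorem gamma_pi_product_general
    (G : Type*) [Group G] (p : ℕ) (P : Sylow p G)
    (n : ℕ)
    (Q : Subgroup (Fin n → G)) (hQ : Q = Subgroup.pi Set.univ fun _ => (P : Subgroup G)) :
    (∀ x : Fin n → G, x ∈ Gamma Q ↔ ∀ i, x i ∈ Gamma (P : Subgroup G)) ∧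
      (Nat.card (Gamma Q) : ℝ) / Nat.card (Fin n → G) =
        ((Nat.card (Gamma (P : Subgroup G)) : ℝ) / Nat.card G) ^ n := by
  subst hQ
  refine ⟨fun x => by rw [gamma_pi_univ, Set.mem_univ_pi], ?_⟩
  rw [natCard_gamma_pi_univ, Nat.card_pi]
  simp [div_pow]

/-- **Remark.** For `D = G^n` and `Q = P^n` (a Sylow `p`-subgroup of `D`), a tuple lies in
`Γ_D(Q)` iff each of its coordinates lies in `Γ_G(P)`; in particular
`|Γ_D(Q)|/|D| = (|Γ_G(P)|/|G|)^n`. -/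
theorem gamma_pi_product
    (G : Type*) [Group G] [Finite G] (p : ℕ) (hp : p.Prime) (P : Sylow p G)
    (n : ℕ) (hn : 1 ≤ n)
    (Q : Subgroup (Fin n → G)) (hQ : Q = Subgroup.pi Set.univ fun _ => (P : Subgroup G)) :
    (∀ x : Fin n → G, x ∈ Gamma Q ↔ ∀ i, x i ∈ Gamma (P : Subgroup G)) ∧
      (Nat.card (Gamma Q) : ℝ) / Nat.card (Fin n → G) =
        ((Nat.card (Gamma (P : Subgroup G)) : ℝ) / Nat.card G) ^ n :=
  gamma_pi_product_general G p P n Q hQ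
end

section
/- Let G be a finite group. Then the hypercenter of G coincides with the intersection of all Sylow normalizers of G; that is, the hypercenter equals the intersection over all primes p and all Sylow p-subgroups P of G of N_G(P). -/
/-!
If `Zₙ ≤ N_G(P)` and `g ∈ Zₙ₊₁`, then `gPg⁻¹ ≤ Zₙ P ≤ N_G(P)`, and a `p`-subgroup normalizing the
Sylow subgroup `P` lies in `P`; so the upper central series lies in every Sylow normalizer.

Conversely let `D` be the intersection of the Sylow normalizers; it is normal in `G`. A Sylow
`q`-subgroup `Q` of `D` is `P ∩ D` for a Sylow `q`-subgroup `P` of `G`, hence normal and so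
characteristic in `D`, hence normal in `G`. For a Sylow `p`-subgroup `P'` with `p ≠ q` we get
`[Q, P'] ≤ Q ∩ P' = 1`, so `G = C_G(Q) P`. As `⁅b, c h⁆ = ⁅b, h⁆` for `b ∈ Q`, `c ∈ C_G(Q)`,
induction gives `Q ∩ Zᵢ(P) ≤ Zᵢ(G)`, and `P` is nilpotent, so `Q` is hypercentral. Since `D` is
generated by its Sylow subgroups, `D` is hypercentral.
-/

open scoped commutatorElement

section

variable {G : Type*} [Group G]

namespace Sylow

theorem mem_normalizer_of_forall_commutator_mem {p : ℕ} {P : Sylow p G} {N : Subgroup G}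
    (hN : N ≤ Subgroup.normalizer (P : Set G)) {g : G} (hg : ∀ y, ⁅g, y⁆ ∈ N) :
    g ∈ Subgroup.normalizer (P : Set G) := by
  have hconj : ((g • P : Sylow p G) : Subgroup G) ≤ Subgroup.normalizer (P : Set G) := by
    rw [coe_subgroup_smul, Subgroup.pointwise_smul_def]
    rintro _ ⟨x, hx, rfl⟩
    show g * x * g⁻¹ ∈ _
    rw [show g * x * g⁻¹ = ⁅g, x⁆ * x by group]
    exact mul_mem (hN (hg x)) (Subgroup.le_normalizer hx)
  have hle : ((g • P : Sylow p G) : Subgroup G) ≤ P := by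
    have := (g • P).2.inf_normalizer_sylow P
    rwa [inf_eq_left.mpr hconj, eq_comm, inf_eq_left] at this
  exact smul_eq_iff_mem_normalizer.mp (ext ((g • P).3 P.2 hle).symm)

end Sylow

namespace Subgroup

theorem eq_top_of_forall_sylow_le [Finite G] {K : Subgroup G}
    (h : ∀ p : ℕ, p.Prime → ∃ P : Sylow p G, (P : Subgroup G) ≤ K) : K = ⊤ := by
  refine index_eq_one.mp (Nat.eq_one_iff_not_exists_prime_dvd.mpr fun p hp hdvd => ?_)
  have := Fact.mk hp
  obtain ⟨P, hPK⟩ := h p hp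
  exact P.not_dvd_index (hdvd.trans (index_dvd_of_le hPK))

theorem le_centralizer_of_le_normalizer_of_disjoint {N H : Subgroup G} [N.Normal]
    (hN : N ≤ normalizer (H : Set G)) (hNH : Disjoint N H) : H ≤ centralizer (N : Set G) := by
  rw [← commutator_eq_bot_iff_le_centralizer, ← le_bot_iff, ← hNH.eq_bot]
  exact le_inf (commutator_le_right H N) (le_normalizer_iff_commutator_le_left.mp hN)

theorem inf_map_upperCentralSeries_le {N H : Subgroup G} [N.Normal]
    (hG : centralizer (N : Set G) ⊔ H = ⊤) (n : ℕ) :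
    N ⊓ (upperCentralSeries H n).map H.subtype ≤ upperCentralSeries G n := by
  induction n with
  | zero => simp
  | succ n ih =>
    rintro _ ⟨ha, b, hb, rfl⟩
    rw [coe_subtype] at ha ⊢
    refine mem_upperCentralSeries_succ_iff.mpr fun g => ?_
    obtain ⟨c, hc, h, hh, rfl⟩ := mem_sup_of_normal_left.mp (hG ▸ mem_top g)
    have hbh : ⁅(b : G), h⁆ ∈ N :=
      commutator_le_left N ⊤ (commutator_mem_commutator ha (mem_top h))
    have hcomm : ⁅(b : G), c * h⁆ = ⁅(b : G), h⁆ := by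
      have hbc := mem_centralizer_iff.mp hc _ ha
      have hc' := mem_centralizer_iff.mp hc _ hbh
      calc ⁅(b : G), c * h⁆ = c * ⁅(b : G), h⁆ * c⁻¹ := by
            simp only [commutatorElement_def, ← mul_assoc]; rw [hbc]; group
        _ = ⁅(b : G), h⁆ := by rw [← hc']; group
    rw [hcomm]
    exact ih ⟨hbh, ⁅b, ⟨h, hh⟩⁆, mem_upperCentralSeries_succ_iff.mp hb _, rfl⟩

theorem le_iSup_upperCentralSeries_of_centralizer_sup_eq_top {N H : Subgroup G} [N.Normal]
    [Group.IsNilpotent H] (hNH : N ≤ H) (hG : centralizer (N : Set G) ⊔ H = ⊤) :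
    N ≤ ⨆ n, upperCentralSeries G n := by
  obtain ⟨n, hn⟩ := Group.IsNilpotent.nilpotent' (G := H)
  calc N = N ⊓ (upperCentralSeries H n).map H.subtype := by
        rw [hn, ← MonoidHom.range_eq_map, range_subtype, inf_eq_left.mpr hNH]
    _ ≤ upperCentralSeries G n := inf_map_upperCentralSeries_le hG n
    _ ≤ ⨆ n, upperCentralSeries G n := le_iSup _ n

def iInfSylowNormalizers (G : Type*) [Group G] : Subgroup G :=
  ⨅ (p : ℕ) (_ : p.Prime) (P : Sylow p G), normalizer ((P : Subgroup G) : Set G)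

theorem mem_iInfSylowNormalizers {g : G} : g ∈ iInfSylowNormalizers G ↔
    ∀ p : ℕ, p.Prime → ∀ P : Sylow p G, g ∈ normalizer ((P : Subgroup G) : Set G) := by
  simp only [iInfSylowNormalizers, mem_iInf]

instance iInfSylowNormalizers_normal : (iInfSylowNormalizers G).Normal where
  conj_mem g hg h := mem_iInfSylowNormalizers.mpr fun p hp P =>
    Sylow.smul_eq_iff_mem_normalizer.mp <| by
      rw [mul_smul, mul_smul,
        Sylow.smul_eq_iff_mem_normalizer.mpr (mem_iInfSylowNormalizers.mp hg p hp _), smul_inv_smul]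

theorem upperCentralSeries_le_iInfSylowNormalizers (n : ℕ) :
    upperCentralSeries G n ≤ iInfSylowNormalizers G := by
  induction n with
  | zero => exact bot_le
  | succ n ih =>
    exact fun g hg => mem_iInfSylowNormalizers.mpr fun p hp P =>
      P.mem_normalizer_of_forall_commutator_mem
        (fun x hx => mem_iInfSylowNormalizers.mp (ih hx) p hp P) hg

variable [Finite G] {N : Subgroup G} [N.Normal] {q : ℕ} [Fact q.Prime]

theorem normal_map_sylow_of_le_iInfSylowNormalizers (hN : N ≤ iInfSylowNormalizers G)
    (Q : Sylow q N) : ((Q : Subgroup N).map N.subtype).Normal := by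
  obtain ⟨P, hQP⟩ := (Q.2.map N.subtype).exists_le_sylow
  have hQ : (Q : Subgroup N) = (P : Subgroup G).subgroupOf N :=
    (Q.3 P.2.comap_subtype (map_le_iff_le_comap.mp hQP)).symm
  have : (Q : Subgroup N).Normal := hQ ▸ normal_subgroupOf_of_le_normalizer
    fun x hx => mem_iInfSylowNormalizers.mp (hN hx) q Fact.out P
  have := Q.characteristic_of_normal this
  infer_instance

theorem map_sylow_le_iSup_upperCentralSeries (hN : N ≤ iInfSylowNormalizers G) (Q : Sylow q N) :
    (Q : Subgroup N).map N.subtype ≤ ⨆ n, upperCentralSeries G n := by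
  have := normal_map_sylow_of_le_iInfSylowNormalizers hN Q
  obtain ⟨P, hQP⟩ := (Q.2.map N.subtype).exists_le_sylow
  have : Group.IsNilpotent P := P.2.isNilpotent
  refine le_iSup_upperCentralSeries_of_centralizer_sup_eq_top hQP
    (eq_top_of_forall_sylow_le fun p hp => ?_)
  by_cases hpq : p = q
  · subst hpq
    exact ⟨P, le_sup_right⟩
  · have := Fact.mk hp
    obtain ⟨P'⟩ := (inferInstance : Nonempty (Sylow p G))
    refine ⟨P', le_sup_of_le_left (le_centralizer_of_le_normalizer_of_disjoint ?_ ?_)⟩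
    · exact fun x hx => mem_iInfSylowNormalizers.mp (hN (map_subtype_le _ hx)) p hp P'
    · exact IsPGroup.disjoint_of_ne q p (Ne.symm hpq) _ _ (Q.2.map _) P'.2

theorem le_iSup_upperCentralSeries_of_le_iInfSylowNormalizers (hN : N ≤ iInfSylowNormalizers G) :
    N ≤ ⨆ n, upperCentralSeries G n := by
  rw [← subgroupOf_eq_top]
  exact eq_top_of_forall_sylow_le fun q hq =>
    have := Fact.mk hq
    ⟨default, map_le_iff_le_comap.mp (map_sylow_le_iSup_upperCentralSeries hN _)⟩

end Subgroup

end

/-- **Theorem (Baer).** For a finite group `G`, the hypercenter (the supremum of the upper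
central series, i.e. its stabilizing term) equals the intersection of all Sylow normalizers. -/
theorem hypercenter_eq_iInf_sylow_normalizers (G : Type*) [Group G] [Finite G] :
    (⨆ n : ℕ, upperCentralSeries G n) =
      ⨅ (p : ℕ) (_ : p.Prime) (P : Sylow p G), Subgroup.normalizer ((P : Subgroup G) : Set G) := by
  change _ = Subgroup.iInfSylowNormalizers G
  exact le_antisymm (iSup_le Subgroup.upperCentralSeries_le_iInfSylowNormalizers)
    (Subgroup.le_iSup_upperCentralSeries_of_le_iInfSylowNormalizers le_rfl)
end
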